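/- arXiv:1410.2198 — 3 statements merged into one kernel-verified Lean document; each statement's English description precedes it below -/
import Mathlib

section
/- Let A_x be a digraph on 3 + 2k(ℓ+1) vertices consisting of: a directed cycle structure on vertices x_s, x, s_1, t_1, s_2, t_2, ..., s_{2k}, t_{2k}, x_t with arcs x_s→x, x→s_1, t_i→s_{i+1} for consecutive indexing along the absorbing route, arcs x_s→s_2, t_{2i}→s_{2i+2} and t_{2i-1}→s_{2i+1} skipping appropriately, arc t_{2k}→s_1, and arcs t_{2k-1}→x_t, t_{2k}→x_t as in the standard absorber construction; together with 2k pairwise vertex-disjoint directed paths P_i from s_i to t_i, each of length ℓ. Then A_x contains a directed path from x_s to x_t of length 3 + 2k(ℓ+1) - 1 passing through all vertices (including x), and a directed path from x_s to x_t of length 3 + 2k(ℓ+1) - 2 passing through all vertices except x. -/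
/-!
Both paths run through every `P i` from `s i` to `t i` and are glued together by arcs of `C`:
the absorbing path is `xs → x → P 1 → P 2 → ⋯ → P (2k) → xt`, the non-absorbing one is
`xs → P 2 → P 4 → ⋯ → P (2k) → P 1 → P 3 → ⋯ → P (2k-1) → xt`. Concatenating the `P i` along a
duplicate-free order of the indices gives a directed path as soon as every two consecutive indices
`i, i'` of the order are joined by an arc `t i → s i'`.
-/

/-- A directed path in the digraph `D`: distinct vertices, consecutive arcs. -/
def IsDiPath {V : Type*} (D : V → V → Bool) (l : List V) : Prop :=
  l.Nodup ∧ l.Chain' (fun u v => D u v = true)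

namespace IsDiPath

variable {V : Type*} {D : V → V → Bool}

theorem nil : IsDiPath D [] := ⟨List.nodup_nil, List.isChain_nil⟩

theorem singleton (a : V) : IsDiPath D [a] := ⟨List.nodup_singleton a, List.isChain_singleton a⟩

theorem append {l₁ l₂ : List V} (h₁ : IsDiPath D l₁) (h₂ : IsDiPath D l₂)
    (hdisj : l₁.Disjoint l₂) (hlink : ∀ a ∈ l₁.getLast?, ∀ b ∈ l₂.head?, D a b = true) :
    IsDiPath D (l₁ ++ l₂) :=
  ⟨List.nodup_append'.2 ⟨h₁.1, h₂.1, hdisj⟩, h₁.2.append h₂.2 hlink⟩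

theorem cons {a : V} {l : List V} (h : IsDiPath D l) (ha : a ∉ l)
    (hlink : ∀ b ∈ l.head?, D a b = true) : IsDiPath D (a :: l) :=
  (singleton a).append h (List.singleton_disjoint.2 ha) (by simpa using hlink)

theorem concat {l : List V} {b : V} (h : IsDiPath D l) (hb : b ∉ l)
    (hlink : ∀ a ∈ l.getLast?, D a b = true) : IsDiPath D (l ++ [b]) :=
  h.append (singleton b) (List.disjoint_singleton.2 hb) (by simpa using hlink)

end IsDiPath

theorem List.isChain_range'_of_forall_mem {R : ℕ → ℕ → Prop} {s n step : ℕ}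
    (h : ∀ a ∈ List.range' s n step, a + step ∈ List.range' s n step → R a (a + step)) :
    (List.range' s n step).IsChain R :=
  (List.isChain_range' s n step).imp_of_mem_imp fun a _ ha hb hab => by
    subst hab
    exact h a ha hb

namespace Absorber

variable {V : Type*} (ℓ : ℕ) (P : ℕ → ℕ → V)

def segment (i : ℕ) : List V := (List.range (ℓ + 1)).map (P i)

def segments (is : List ℕ) : List V := is.flatMap (segment ℓ P)

variable {ℓ P}

theorem mem_segment {i : ℕ} {v : V} : v ∈ segment ℓ P i ↔ ∃ j ≤ ℓ, P i j = v := by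
  simp [segment]

theorem head?_segment (i : ℕ) : (segment ℓ P i).head? = some (P i 0) := by
  simp [segment, List.range_succ_eq_map]

theorem getLast?_segment (i : ℕ) : (segment ℓ P i).getLast? = some (P i ℓ) := by
  simp [segment, List.range_succ]

theorem segments_cons (i : ℕ) (is : List ℕ) :
    segments ℓ P (i :: is) = segment ℓ P i ++ segments ℓ P is := List.flatMap_cons

theorem mem_segments {is : List ℕ} {v : V} :
    v ∈ segments ℓ P is ↔ ∃ i ∈ is, ∃ j ≤ ℓ, P i j = v := by
  simp [segments, mem_segment]

theorem length_segments (is : List ℕ) : (segments ℓ P is).length = is.length * (ℓ + 1) := by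
  simp [segments, segment, List.length_flatMap]

theorem head?_segments (is : List ℕ) : (segments ℓ P is).head? = is.head?.map (P · 0) := by
  cases is <;> simp [head?_segment, segments]

theorem getLast?_segments (is : List ℕ) :
    (segments ℓ P is).getLast? = is.getLast?.map (P · ℓ) := by
  induction is with
  | nil => rfl
  | cons i is ih =>
    cases is with
    | nil => simp [segments, getLast?_segment]
    | cons i' is => rw [segments_cons, List.getLast?_append, ih]; simp [List.getLast?_cons]

theorem isDiPath_segment {D : V → V → Bool} {i : ℕ}
    (hadj : ∀ j < ℓ, D (P i j) (P i (j + 1)) = true)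
    (hinj : ∀ j ≤ ℓ, ∀ j' ≤ ℓ, P i j = P i j' → j = j') :
    IsDiPath D (segment ℓ P i) := by
  refine ⟨List.Nodup.map_on (fun j hj j' hj' => ?_) List.nodup_range, ?_⟩
  · simp only [List.mem_range, Nat.lt_succ_iff] at hj hj'
    exact hinj j hj j' hj'
  · rw [segment, List.Chain', List.isChain_map, List.isChain_range_succ]
    exact hadj

theorem isDiPath_segments {D : V → V → Bool} {I : Finset ℕ}
    (hadj : ∀ i ∈ I, ∀ j < ℓ, D (P i j) (P i (j + 1)) = true)
    (hinj : ∀ i ∈ I, ∀ i' ∈ I, ∀ j ≤ ℓ, ∀ j' ≤ ℓ, P i j = P i' j' → i = i' ∧ j = j') :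
    ∀ {is : List ℕ}, is.Nodup → (∀ i ∈ is, i ∈ I) →
      is.IsChain (fun i i' => D (P i ℓ) (P i' 0) = true) → IsDiPath D (segments ℓ P is)
  | [], _, _, _ => IsDiPath.nil
  | i :: is, hnd, hsub, hlink => by
    have hi := hsub i List.mem_cons_self
    have hsub' : ∀ i' ∈ is, i' ∈ I := fun i' hi' => hsub i' (List.mem_cons_of_mem i hi')
    have hseg : IsDiPath D (segment ℓ P i) :=
      isDiPath_segment (hadj i hi) fun j hj j' hj' h => (hinj i hi i hi j hj j' hj' h).2
    rw [segments_cons]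
    refine hseg.append (isDiPath_segments hadj hinj hnd.of_cons hsub' hlink.tail) ?_ ?_
    · intro v hv hv'
      obtain ⟨j, hj, rfl⟩ := mem_segment.1 hv
      obtain ⟨i', hi', j', hj', h⟩ := mem_segments.1 hv'
      obtain rfl := (hinj i hi i' (hsub' i' hi') j hj j' hj' h.symm).1
      exact (List.nodup_cons.1 hnd).1 hi'
    · rw [getLast?_segment, head?_segments]
      simpa using (List.isChain_cons.1 hlink).1

def absorbingOrder (k : ℕ) : List ℕ := List.range' 1 (2 * k)

def nonAbsorbingOrder (k : ℕ) : List ℕ := List.range' 2 k 2 ++ List.range' 1 k 2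

variable {k : ℕ}

theorem nodup_absorbingOrder : (absorbingOrder k).Nodup := List.nodup_range'

theorem mem_absorbingOrder {i : ℕ} : i ∈ absorbingOrder k ↔ i ∈ Finset.Icc 1 (2 * k) := by
  simp only [absorbingOrder, List.mem_range'_1, Finset.mem_Icc]
  omega

theorem length_absorbingOrder : (absorbingOrder k).length = 2 * k := List.length_range'

theorem head?_absorbingOrder (hk : 0 < k) : (absorbingOrder k).head? = some 1 := by
  simp [absorbingOrder, List.head?_range', hk.ne']

theorem getLast?_absorbingOrder (hk : 0 < k) : (absorbingOrder k).getLast? = some (2 * k) := by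
  simp [absorbingOrder, List.getLast?_range', hk.ne']

theorem isChain_absorbingOrder {R : ℕ → ℕ → Prop} (h : ∀ i, 1 ≤ i → i < 2 * k → R i (i + 1)) :
    (absorbingOrder k).IsChain R :=
  List.isChain_range'_of_forall_mem fun i hi hi' => by
    simp only [List.mem_range'_1] at hi hi'
    exact h i hi.1 (by omega)

theorem nodup_nonAbsorbingOrder : (nonAbsorbingOrder k).Nodup := by
  refine List.nodup_append.2 ⟨List.nodup_range' 2, List.nodup_range' 2, ?_⟩
  intro a ha b hb
  obtain ⟨m, -, rfl⟩ := List.mem_range'.1 ha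
  obtain ⟨m', -, rfl⟩ := List.mem_range'.1 hb
  omega

theorem mem_nonAbsorbingOrder {i : ℕ} : i ∈ nonAbsorbingOrder k ↔ i ∈ Finset.Icc 1 (2 * k) := by
  simp only [nonAbsorbingOrder, List.mem_append, List.mem_range', Finset.mem_Icc]
  constructor
  · rintro (⟨m, hm, rfl⟩ | ⟨m, hm, rfl⟩) <;> omega
  · rintro ⟨h1, h2⟩
    obtain ⟨m, rfl | rfl⟩ := Nat.even_or_odd' i
    · exact Or.inl ⟨m - 1, by omega, by omega⟩
    · exact Or.inr ⟨m, by omega, by omega⟩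

theorem length_nonAbsorbingOrder : (nonAbsorbingOrder k).length = 2 * k := by
  simp [nonAbsorbingOrder]
  omega

theorem head?_nonAbsorbingOrder (hk : 0 < k) : (nonAbsorbingOrder k).head? = some 2 := by
  obtain ⟨k, rfl⟩ := Nat.exists_eq_add_one_of_ne_zero hk.ne'
  simp [nonAbsorbingOrder, List.range'_succ]

theorem getLast?_nonAbsorbingOrder (hk : 0 < k) :
    (nonAbsorbingOrder k).getLast? = some (2 * k - 1) := by
  obtain ⟨k, rfl⟩ := Nat.exists_eq_add_one_of_ne_zero hk.ne'
  simp [nonAbsorbingOrder, List.range'_concat (s := 1)]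
  omega

theorem isChain_nonAbsorbingOrder {R : ℕ → ℕ → Prop}
    (heven : ∀ i, 1 ≤ i → 2 * i + 2 ≤ 2 * k → R (2 * i) (2 * i + 2))
    (hodd : ∀ i, 1 ≤ i → 2 * i + 1 ≤ 2 * k → R (2 * i - 1) (2 * i + 1))
    (hwrap : R (2 * k) 1) :
    (nonAbsorbingOrder k).IsChain R := by
  refine List.IsChain.append ?_ ?_ ?_
  · refine List.isChain_range'_of_forall_mem fun i hi hi' => ?_
    simp only [List.mem_range'] at hi hi'
    obtain ⟨m, -, rfl⟩ := hi
    convert heven (m + 1) (by omega) (by omega) using 1 <;> ring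
  · refine List.isChain_range'_of_forall_mem fun i hi hi' => ?_
    simp only [List.mem_range'] at hi hi'
    obtain ⟨m, -, rfl⟩ := hi
    convert hodd (m + 1) (by omega) (by omega) using 1 <;> omega
  · cases k with
    | zero => simp
    | succ k =>
      simpa [List.range'_concat (s := 2), List.range'_succ (s := 1),
        show 2 + 2 * k = 2 * (k + 1) by ring] using hwrap

theorem isDiPath_append_segments_append {D : V → V → Bool} {I : Finset ℕ}
    (hadj : ∀ i ∈ I, ∀ j < ℓ, D (P i j) (P i (j + 1)) = true)
    (hinj : ∀ i ∈ I, ∀ i' ∈ I, ∀ j ≤ ℓ, ∀ j' ≤ ℓ, P i j = P i' j' → i = i' ∧ j = j')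
    {pre : List V} {b : V} {is : List ℕ} (hpre : IsDiPath D pre) (hb : b ∉ pre)
    (hnew : ∀ i ∈ I, ∀ j ≤ ℓ, P i j ∉ pre ∧ P i j ≠ b)
    (hne : is ≠ []) (hnd : is.Nodup) (hsub : ∀ i ∈ is, i ∈ I)
    (hlink : is.IsChain (fun i i' => D (P i ℓ) (P i' 0) = true))
    (hfirst : ∀ a ∈ pre.getLast?, ∀ i ∈ is.head?, D a (P i 0) = true)
    (hlast : ∀ i ∈ is.getLast?, D (P i ℓ) b = true) :
    IsDiPath D (pre ++ segments ℓ P is ++ [b]) := by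
  have hfresh : ∀ v ∈ segments ℓ P is, v ∉ pre ∧ v ≠ b := by
    intro v hv
    obtain ⟨i, hi, j, hj, rfl⟩ := mem_segments.1 hv
    exact hnew i (hsub i hi) j hj
  refine (hpre.append (isDiPath_segments hadj hinj hnd hsub hlink)
    (fun v hv hv' => (hfresh v hv').1 hv) ?_).concat ?_ ?_
  · simpa [head?_segments] using hfirst
  · simpa [hb] using fun h => (hfresh b h).2 rfl
  · simpa [List.getLast?_append, getLast?_segments, List.getLast?_eq_some_getLast hne] using
      hlast _ (List.getLast?_eq_some_getLast hne)

theorem mem_append_segments_append {I : Finset ℕ} {pre : List V} {b v : V} {is : List ℕ}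
    (his : ∀ i, i ∈ is ↔ i ∈ I) :
    v ∈ pre ++ segments ℓ P is ++ [b] ↔ v ∈ pre ∨ v = b ∨ ∃ i ∈ I, ∃ j ≤ ℓ, P i j = v := by
  simp only [List.mem_append, mem_segments, his, List.mem_singleton]
  grind

end Absorber

open Absorber in
theorem stmt_1_general {V : Type*} (D : V → V → Bool) (k ℓ : ℕ) (hk : 0 < k)
    (xs x xt : V) (s t : ℕ → V) (P : ℕ → ℕ → V)
    -- the 2k pairwise disjoint directed s_i t_i-paths of length ℓ
    (hPstart : ∀ i ∈ Finset.Icc 1 (2*k), P i 0 = s i)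
    (hPend : ∀ i ∈ Finset.Icc 1 (2*k), P i ℓ = t i)
    (hPadj : ∀ i ∈ Finset.Icc 1 (2*k), ∀ j < ℓ, D (P i j) (P i (j+1)) = true)
    (hPinj : ∀ i ∈ Finset.Icc 1 (2*k), ∀ i' ∈ Finset.Icc 1 (2*k), ∀ j ≤ ℓ, ∀ j' ≤ ℓ,
      P i j = P i' j' → i = i' ∧ j = j')
    (hnew : ∀ i ∈ Finset.Icc 1 (2*k), ∀ j ≤ ℓ, P i j ≠ xs ∧ P i j ≠ x ∧ P i j ≠ xt)
    (hdist : xs ≠ x ∧ xs ≠ xt ∧ x ≠ xt)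
    -- the arcs of the cycle C
    (h1 : D xs x = true) (h2 : D x (s 1) = true)
    (h3 : ∀ i, 1 ≤ i → i < 2*k → D (t i) (s (i+1)) = true)
    (h4 : D xs (s 2) = true)
    (h5 : ∀ i, 1 ≤ i → 2*i + 2 ≤ 2*k → D (t (2*i)) (s (2*i+2)) = true)
    (h6 : ∀ i, 1 ≤ i → 2*i + 1 ≤ 2*k → D (t (2*i-1)) (s (2*i+1)) = true)
    (h7 : D (t (2*k)) (s 1) = true)
    (h8 : D (t (2*k-1)) xt = true) (h9 : D (t (2*k)) xt = true) :
    ∃ l₁ l₂ : List V,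
      -- the absorbing path: 3 + 2k(ℓ+1) vertices, i.e. length 3 + 2k(ℓ+1) - 1
      IsDiPath D l₁ ∧ l₁.head? = some xs ∧ l₁.getLast? = some xt ∧
      l₁.length = 3 + 2*k*(ℓ+1) ∧
      (∀ v, v ∈ l₁ ↔ (v = xs ∨ v = x ∨ v = xt ∨
        ∃ i ∈ Finset.Icc 1 (2*k), ∃ j ≤ ℓ, P i j = v)) ∧
      -- the non-absorbing path: all vertices except x
      IsDiPath D l₂ ∧ l₂.head? = some xs ∧ l₂.getLast? = some xt ∧
      l₂.length = 3 + 2*k*(ℓ+1) - 1 ∧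
      (∀ v, v ∈ l₂ ↔ (v = xs ∨ v = xt ∨
        ∃ i ∈ Finset.Icc 1 (2*k), ∃ j ≤ ℓ, P i j = v)) := by
  obtain ⟨hxs_x, hxs_xt, hx_xt⟩ := hdist
  have harc {i i' : ℕ} (hi : 1 ≤ i ∧ i ≤ 2 * k) (hi' : 1 ≤ i' ∧ i' ≤ 2 * k)
      (h : D (t i) (s i') = true) : D (P i ℓ) (P i' 0) = true := by
    rwa [hPend i (Finset.mem_Icc.2 hi), hPstart i' (Finset.mem_Icc.2 hi')]
  have habs : IsDiPath D ([xs, x] ++ segments ℓ P (absorbingOrder k) ++ [xt]) := by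
    refine isDiPath_append_segments_append hPadj hPinj
      ((IsDiPath.singleton x).cons (by simpa using hxs_x) (by simpa using h1))
      (by simp [hxs_xt.symm, hx_xt.symm]) (fun i hi j hj => by simp [hnew i hi j hj])
      (by simp [absorbingOrder]; omega) nodup_absorbingOrder (fun i => mem_absorbingOrder.1)
      (isChain_absorbingOrder fun i h h' => harc (by omega) (by omega) (h3 i h h')) ?_ ?_
    · simpa [head?_absorbingOrder hk, hPstart 1 (by simp; omega)] using h2
    · simpa [getLast?_absorbingOrder hk, hPend (2 * k) (by simp; omega)] using h9
  have hnonabs : IsDiPath D ([xs] ++ segments ℓ P (nonAbsorbingOrder k) ++ [xt]) := by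
    refine isDiPath_append_segments_append hPadj hPinj (IsDiPath.singleton xs)
      (by simp [hxs_xt.symm]) (fun i hi j hj => by simp [hnew i hi j hj])
      (by simp [nonAbsorbingOrder]; omega) nodup_nonAbsorbingOrder
      (fun i => mem_nonAbsorbingOrder.1)
      (isChain_nonAbsorbingOrder (fun i h h' => harc (by omega) (by omega) (h5 i h h'))
        (fun i h h' => harc (by omega) (by omega) (h6 i h h')) (harc (by omega) (by omega) h7))
      ?_ ?_
    · simpa [head?_nonAbsorbingOrder hk, hPstart 2 (by simp; omega)] using h4
    · simpa [getLast?_nonAbsorbingOrder hk, hPend (2 * k - 1) (by simp; omega)] using h8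
  refine ⟨_, _, habs, rfl, List.getLast?_concat, ?_, fun v => ?_,
    hnonabs, rfl, List.getLast?_concat, ?_, fun v => ?_⟩
  · simp [length_segments, length_absorbingOrder]
    ring
  · rw [mem_append_segments_append fun _ => mem_absorbingOrder]
    simp [or_assoc]
  · simp [length_segments, length_nonAbsorbingOrder]
    ring_nf
  · rw [mem_append_segments_append fun _ => mem_nonAbsorbingOrder]
    simp

/-- The standard absorber structure (Figure 1 of the paper) contains an
absorbing path (through all of its `3 + 2k(ℓ+1)` vertices, including `x`) and a
non-absorbing path (through all vertices except `x`), both from `xs` to `xt`. -/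
theorem stmt_1 {V : Type*} [DecidableEq V] (D : V → V → Bool) (k ℓ : ℕ) (hk : 0 < k)
    (xs x xt : V) (s t : ℕ → V) (P : ℕ → ℕ → V)
    -- the 2k pairwise disjoint directed s_i t_i-paths of length ℓ
    (hPstart : ∀ i ∈ Finset.Icc 1 (2*k), P i 0 = s i)
    (hPend : ∀ i ∈ Finset.Icc 1 (2*k), P i ℓ = t i)
    (hPadj : ∀ i ∈ Finset.Icc 1 (2*k), ∀ j < ℓ, D (P i j) (P i (j+1)) = true)
    (hPinj : ∀ i ∈ Finset.Icc 1 (2*k), ∀ i' ∈ Finset.Icc 1 (2*k), ∀ j ≤ ℓ, ∀ j' ≤ ℓ,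
      P i j = P i' j' → i = i' ∧ j = j')
    (hnew : ∀ i ∈ Finset.Icc 1 (2*k), ∀ j ≤ ℓ, P i j ≠ xs ∧ P i j ≠ x ∧ P i j ≠ xt)
    (hdist : xs ≠ x ∧ xs ≠ xt ∧ x ≠ xt)
    -- the arcs of the cycle C
    (h1 : D xs x = true) (h2 : D x (s 1) = true)
    (h3 : ∀ i, 1 ≤ i → i < 2*k → D (t i) (s (i+1)) = true)
    (h4 : D xs (s 2) = true)
    (h5 : ∀ i, 1 ≤ i → 2*i + 2 ≤ 2*k → D (t (2*i)) (s (2*i+2)) = true)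
    (h6 : ∀ i, 1 ≤ i → 2*i + 1 ≤ 2*k → D (t (2*i-1)) (s (2*i+1)) = true)
    (h7 : D (t (2*k)) (s 1) = true)
    (h8 : D (t (2*k-1)) xt = true) (h9 : D (t (2*k)) xt = true) :
    ∃ l₁ l₂ : List V,
      -- the absorbing path: 3 + 2k(ℓ+1) vertices, i.e. length 3 + 2k(ℓ+1) - 1
      IsDiPath D l₁ ∧ l₁.head? = some xs ∧ l₁.getLast? = some xt ∧
      l₁.length = 3 + 2*k*(ℓ+1) ∧
      (∀ v, v ∈ l₁ ↔ (v = xs ∨ v = x ∨ v = xt ∨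
        ∃ i ∈ Finset.Icc 1 (2*k), ∃ j ≤ ℓ, P i j = v)) ∧
      -- the non-absorbing path: all vertices except x
      IsDiPath D l₂ ∧ l₂.head? = some xs ∧ l₂.getLast? = some xt ∧
      l₂.length = 3 + 2*k*(ℓ+1) - 1 ∧
      (∀ v, v ∈ l₂ ↔ (v = xs ∨ v = xt ∨
        ∃ i ∈ Finset.Icc 1 (2*k), ∃ j ≤ ℓ, P i j = v)) :=
  stmt_1_general D k ℓ hk xs x xt s t P hPstart hPend hPadj hPinj hnew hdist h1 h2 h3 h4 h5 h6 h7 h8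
    h9
end

section
/- Let p = ω((log n)^8/n) and G ~ D(n,p). Then with high probability, for every set X ⊆ V(G) of size |X| ≤ (log n)^2/p, the number of arcs of G with both endpoints in X is at most |X|·(log n)^{2.1}. -/
open Filter MeasureTheory

/-- The random digraph `D(n, p)`: each ordered pair is an arc independently with
probability `p` (diagonal coordinates are present in the sample space but are
ignored: an arc is a pair `(v, w)` with `v ≠ w` and `G v w = true`). -/
noncomputable def digraphMeasure (n : ℕ) (p : ℝ) : Measure (Fin n → Fin n → Bool) :=
  Measure.pi fun _ => Measure.pi fun _ =>
    (PMF.bernoulli (min (Real.toNNReal p) 1) (min_le_right _ _)).toMeasure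

/-- The number of arcs with both endpoints in `X`. -/
def arcsIn {n : ℕ} (G : Fin n → Fin n → Bool) (X : Finset (Fin n)) : ℕ :=
  ((X ×ˢ X).filter fun e => e.1 ≠ e.2 ∧ G e.1 e.2 = true).card

/-! For a fixed set `X` of size `k ≤ log² n / p`, `e(X)` is a sum of fewer than `k²` independent
Bernoulli(`p`) variables, so `E[exp e(X)] ≤ exp(2pk²) ≤ exp(2k log² n)`, and the exponential Markov
inequality gives `P(e(X) > k log^{2.1} n) ≤ exp(-k log² n)` as soon as `log^{0.1} n ≥ 3`.
This is at most `exp(-log² n / 2) n^{-k}`, and `∑_X n^{-|X|} = (1 + 1/n)^n ≤ e`, so a union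
bound over all `X` shows that the failure probability is at most `e · exp(-log² n / 2)`. -/

open Real ProbabilityTheory Finset

instance (n : ℕ) (p : ℝ) : IsProbabilityMeasure (digraphMeasure n p) := by
  unfold digraphMeasure; infer_instance

lemma arcsIn_eq_sum {n : ℕ} (G : Fin n → Fin n → Bool) (X : Finset (Fin n)) :
    (arcsIn G X : ℝ) = ∑ i, ∑ j, if (i, j) ∈ X.offDiag ∧ G i j = true then 1 else 0 := by
  rw [← Fintype.sum_prod_type', Finset.sum_boole, arcsIn]
  congr 2
  ext ⟨i, j⟩
  simp [and_assoc]

set_option linter.deprecated false in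
lemma integral_exp_bernoulli_le (q : NNReal) (hq : q ≤ 1) :
    ∫ b, exp (if b then 1 else 0) ∂(PMF.bernoulli q hq).toMeasure ≤ exp (2 * q) := by
  have he : q * (exp 1 - 1) ≤ q * 2 :=
    mul_le_mul_of_nonneg_left (by linarith [exp_one_lt_d9]) q.2
  calc ∫ b, exp (if b then 1 else 0) ∂(PMF.bernoulli q hq).toMeasure
      = q * (exp 1 - 1) + 1 := by
        simp [PMF.integral_eq_sum, PMF.bernoulli_apply, hq]; ring
    _ ≤ exp (q * (exp 1 - 1)) := add_one_le_exp _
    _ ≤ exp (2 * q) := exp_le_exp.2 (by linarith)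

set_option linter.deprecated false in
lemma mgf_arcsIn_le {n : ℕ} {p : ℝ} (hp : 0 ≤ p) (X : Finset (Fin n)) :
    mgf (fun G => (arcsIn G X : ℝ)) (digraphMeasure n p) 1 ≤ exp (2 * p * X.card ^ 2) := by
  set ν := (PMF.bernoulli (min p.toNNReal 1) (min_le_right _ _)).toMeasure
  have hfactor : ∀ i j, ∫ b, exp (if (i, j) ∈ X.offDiag ∧ b = true then 1 else 0) ∂ν ≤
      if (i, j) ∈ X.offDiag then exp (2 * p) else 1 := by
    intro i j
    split_ifs with h
    · simpa [h] using (integral_exp_bernoulli_le _ _).trans (exp_le_exp.2 (by simp [hp]))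
    · simp [h]
  calc mgf (fun G => (arcsIn G X : ℝ)) (digraphMeasure n p) 1
      = ∏ i, ∏ j, ∫ b, exp (if (i, j) ∈ X.offDiag ∧ b = true then 1 else 0) ∂ν := by
        simp only [mgf, one_mul, arcsIn_eq_sum, exp_sum, digraphMeasure]
        rw [integral_fintype_prod_eq_prod (fun i (g : Fin n → Bool) =>
          ∏ j, exp (if (i, j) ∈ X.offDiag ∧ g j = true then 1 else 0))]
        exact Finset.prod_congr rfl fun i _ => integral_fintype_prod_eq_prod
          (fun j (b : Bool) => exp (if (i, j) ∈ X.offDiag ∧ b = true then 1 else 0))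
    _ ≤ ∏ i, ∏ j, if (i, j) ∈ X.offDiag then exp (2 * p) else 1 := by
        gcongr with i _ j _
        exact hfactor i j
    _ = exp (2 * p) ^ (X.card * X.card - X.card) := by
        rw [← Fintype.prod_prod_type', Fintype.prod_ite_mem, prod_const, offDiag_card]
    _ ≤ exp (2 * p) ^ (X.card ^ 2) := by
        gcongr
        · exact one_le_exp (by positivity)
        · rw [sq]; exact Nat.sub_le _ _
    _ = exp (2 * p * X.card ^ 2) := by rw [← exp_nat_mul]; push_cast; ring_nf

lemma measureReal_le_arcsIn_le {n : ℕ} {p : ℝ} (hp : 0 ≤ p) (X : Finset (Fin n)) (t : ℝ) :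
    (digraphMeasure n p).real {G | t ≤ arcsIn G X} ≤ exp (2 * p * X.card ^ 2 - t) :=
  calc (digraphMeasure n p).real {G | t ≤ arcsIn G X}
      ≤ exp (-1 * t) * mgf (fun G => (arcsIn G X : ℝ)) (digraphMeasure n p) 1 :=
        measure_ge_le_exp_mul_mgf t zero_le_one .of_finite
    _ ≤ exp (-t) * exp (2 * p * X.card ^ 2) := by
        rw [neg_one_mul]; gcongr; exact mgf_arcsIn_le hp X
    _ = exp (2 * p * X.card ^ 2 - t) := by rw [← exp_add]; ring_nf

lemma three_le_rpow_one_div_ten {l : ℝ} (hl : 3 ^ 10 ≤ l) : 3 ≤ l ^ (0.1 : ℝ) :=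
  calc (3 : ℝ) = ((3 : ℝ) ^ (10 : ℕ)) ^ (0.1 : ℝ) := by
        rw [← Real.rpow_natCast, ← Real.rpow_mul (by norm_num)]; norm_num
    _ ≤ l ^ (0.1 : ℝ) := by gcongr

lemma chernoff_exponent_le {l k p : ℝ} (hl : 3 ^ 10 ≤ l) (hk : 1 ≤ k) (hpk : p * k ≤ l ^ 2) :
    2 * p * k ^ 2 - k * l ^ (2.1 : ℝ) ≤ -(l ^ 2 / 2) - k * l := by
  have hl0 : 0 < l := lt_of_lt_of_le (by norm_num) hl
  have hsplit : l ^ (2.1 : ℝ) = l ^ 2 * l ^ (0.1 : ℝ) := by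
    rw [← Real.rpow_natCast l 2, ← Real.rpow_add hl0]; norm_num
  have h3 : k * l ^ 2 * 3 ≤ k * l ^ (2.1 : ℝ) := by
    rw [hsplit, ← mul_assoc]; gcongr; exact three_le_rpow_one_div_ten hl
  nlinarith [mul_le_mul_of_nonneg_left hpk (by linarith : (0 : ℝ) ≤ k),
    mul_le_mul_of_nonneg_right hk (by nlinarith : (0 : ℝ) ≤ l ^ 2 - 2 * l)]

lemma measureReal_many_arcs_le {n : ℕ} {p : ℝ} (hp : 0 < p) (hl : 3 ^ 10 ≤ log n)
    {X : Finset (Fin n)} (hX : X.Nonempty) (hXp : (X.card : ℝ) ≤ log n ^ 2 / p) :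
    (digraphMeasure n p).real {G | (X.card : ℝ) * log n ^ (2.1 : ℝ) < arcsIn G X} ≤
      exp (-(log n ^ 2 / 2)) * (n : ℝ)⁻¹ ^ X.card := by
  have hn : (0 : ℝ) < n := by
    by_contra! h
    rw [le_antisymm h n.cast_nonneg, log_zero] at hl
    norm_num at hl
  have hk : (1 : ℝ) ≤ X.card := by exact_mod_cast hX.card_pos
  have hpk : p * X.card ≤ log n ^ 2 := by rwa [le_div_iff₀ hp, mul_comm] at hXp
  calc (digraphMeasure n p).real {G | (X.card : ℝ) * log n ^ (2.1 : ℝ) < arcsIn G X}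
      ≤ (digraphMeasure n p).real {G | (X.card : ℝ) * log n ^ (2.1 : ℝ) ≤ arcsIn G X} :=
        measureReal_mono (Set.ofPred_subset_ofPred.2 fun _ => le_of_lt)
    _ ≤ exp (2 * p * X.card ^ 2 - X.card * log n ^ (2.1 : ℝ)) :=
        measureReal_le_arcsIn_le hp.le X _
    _ ≤ exp (-(log n ^ 2 / 2) - X.card * log n) :=
        exp_le_exp.2 (chernoff_exponent_le hl hk hpk)
    _ = exp (-(log n ^ 2 / 2)) * (n : ℝ)⁻¹ ^ X.card := by
        rw [sub_eq_add_neg, exp_add, ← mul_neg, exp_nat_mul, exp_neg (log n), exp_log hn]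

lemma sum_inv_pow_card_le_exp_one (n : ℕ) :
    ∑ X : Finset (Fin n), (n : ℝ)⁻¹ ^ X.card ≤ exp 1 := by
  simpa using (Fin.sum_pow_mul_eq_add_pow (n : ℝ)⁻¹ 1).trans_le
    (by rw [add_comm]; exact one_add_inv_pow_le_exp)

lemma measureReal_not_locally_sparse_le {n : ℕ} {p : ℝ} (hp : 0 < p) (hl : 3 ^ 10 ≤ log n) :
    (digraphMeasure n p).real {G | ∀ X : Finset (Fin n), (X.card : ℝ) ≤ log n ^ 2 / p →
        (arcsIn G X : ℝ) ≤ X.card * log n ^ (2.1 : ℝ)}ᶜ ≤ exp 1 * exp (-(log n ^ 2 / 2)) := by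
  classical
  set S := univ.filter fun X : Finset (Fin n) => X.Nonempty ∧ (X.card : ℝ) ≤ log n ^ 2 / p
  have hcover : {G | ∀ X : Finset (Fin n), (X.card : ℝ) ≤ log n ^ 2 / p →
      (arcsIn G X : ℝ) ≤ X.card * log n ^ (2.1 : ℝ)}ᶜ ⊆
        ⋃ X ∈ S, {G | (X.card : ℝ) * log n ^ (2.1 : ℝ) < arcsIn G X} := by
    intro G hG
    simp only [Set.mem_compl_iff, Set.mem_ofPred_eq, not_forall, not_le] at hG
    obtain ⟨X, hXp, hmany⟩ := hG
    have hX : X.Nonempty := by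
      rw [nonempty_iff_ne_empty]
      rintro rfl
      simp [arcsIn] at hmany
    exact Set.mem_biUnion (mem_filter.2 ⟨mem_univ X, hX, hXp⟩) hmany
  calc _ ≤ ∑ X ∈ S, (digraphMeasure n p).real
          {G | (X.card : ℝ) * log n ^ (2.1 : ℝ) < arcsIn G X} :=
        (measureReal_mono hcover (measure_ne_top _ _)).trans (measureReal_biUnion_finset_le _ _)
    _ ≤ ∑ X ∈ S, exp (-(log n ^ 2 / 2)) * (n : ℝ)⁻¹ ^ X.card := by
        gcongr with X hX
        exact measureReal_many_arcs_le hp hl (mem_filter.1 hX).2.1 (mem_filter.1 hX).2.2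
    _ ≤ ∑ X : Finset (Fin n), exp (-(log n ^ 2 / 2)) * (n : ℝ)⁻¹ ^ X.card :=
        sum_le_univ_sum_of_nonneg fun _ => by positivity
    _ ≤ exp (-(log n ^ 2 / 2)) * exp 1 := by
        rw [← mul_sum]; gcongr; exact sum_inv_pow_card_le_exp_one n
    _ = exp 1 * exp (-(log n ^ 2 / 2)) := mul_comm _ _

lemma tendsto_measure_of_tendsto_measureReal_compl {ι : Type*} {l : Filter ι} {Ω : ι → Type*}
    [∀ i, MeasurableSpace (Ω i)] {μ : ∀ i, Measure (Ω i)} [∀ i, IsProbabilityMeasure (μ i)]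
    {s : ∀ i, Set (Ω i)} (hs : ∀ i, MeasurableSet (s i))
    (h : Tendsto (fun i => (μ i).real (s i)ᶜ) l (nhds 0)) :
    Tendsto (fun i => μ i (s i)) l (nhds 1) := by
  have hμ : ∀ i, μ i (s i) = ENNReal.ofReal (1 - (μ i).real (s i)ᶜ) := fun i => by
    rw [probReal_compl_eq_one_sub (hs i), sub_sub_cancel, ofReal_measureReal]
  simpa [hμ] using ENNReal.tendsto_ofReal (h.const_sub 1)

theorem stmt_6_general (p : ℕ → ℝ) (hp : ∀ n, 0 < p n ∧ p n ≤ 1) :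
    Tendsto (fun n : ℕ => digraphMeasure n (p n)
        {G | ∀ X : Finset (Fin n), (X.card : ℝ) ≤ (Real.log n) ^ 2 / p n →
          (arcsIn G X : ℝ) ≤ (X.card : ℝ) * (Real.log n) ^ (2.1 : ℝ)})
      atTop (nhds 1) := by
  have hlog : Tendsto (fun n : ℕ => log n) atTop atTop :=
    tendsto_log_atTop.comp tendsto_natCast_atTop_atTop
  have hbound : Tendsto (fun n : ℕ => exp 1 * exp (-(log n ^ 2 / 2))) atTop (nhds 0) := by
    simpa using (tendsto_exp_neg_atTop_nhds_zero.comp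
      (((tendsto_pow_atTop two_ne_zero).comp hlog).atTop_div_const two_pos)).const_mul (exp 1)
  refine tendsto_measure_of_tendsto_measureReal_compl (fun _ => .of_discrete) ?_
  refine squeeze_zero' (Eventually.of_forall fun _ => measureReal_nonneg) ?_ hbound
  filter_upwards [hlog.eventually_ge_atTop (3 ^ 10)] with n hn
  exact measureReal_not_locally_sparse_le (hp n).1 hn

/-- W.h.p., in `G ~ D(n,p)` with `p = ω(log^8 n / n)`, every set `X` of size at
most `log^2 n / p` spans at most `|X| log^{2.1} n` arcs. -/
theorem stmt_6 (p : ℕ → ℝ) (hp : ∀ n, 0 < p n ∧ p n ≤ 1)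
    (hω : Tendsto (fun n : ℕ => p n * n / (Real.log n) ^ 8) atTop atTop) :
    Tendsto (fun n : ℕ => digraphMeasure n (p n)
        {G | ∀ X : Finset (Fin n), (X.card : ℝ) ≤ (Real.log n) ^ 2 / p n →
          (arcsIn G X : ℝ) ≤ (X.card : ℝ) * (Real.log n) ^ (2.1 : ℝ)})
      atTop (nhds 1) :=
  stmt_6_general p hp
end

section
/- Let D be a digraph, i < ℓ integers, σ ∈ {+,−}^ℓ, and suppose Y satisfies: |Y| ≥ (6ℓ/γ)⌈(log n)^2/p⌉ and for every S ⊆ Y with |S| ≥ (log n)^2/p, |N^+(S,Y)|, |N^−(S,Y)| ≥ (1/2+γ)|Y|. If A ⊆ X satisfies |N^{σ^i}(A,Y)| ≥ 2(log n)^2/p, then there exists A' ⊆ A with |A'| ≤ ⌈|A|/2⌉ and |N^{σ^{i+1}}(A',Y)| ≥ 2(log n)^2/p. -/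
open Filter


/-- A `σ`-walk: all vertices distinct except possibly first = last, following
out-arcs at `+` (true) steps and in-arcs at `-` (false) steps. -/
def IsSigmaWalk {n ℓ : ℕ} (D : Fin n → Fin n → Bool) (σ : Fin ℓ → Bool)
    (f : Fin (ℓ+1) → Fin n) : Prop :=
  (∀ i : Fin ℓ, if σ i then D (f i.castSucc) (f i.succ) = true
    else D (f i.succ) (f i.castSucc) = true) ∧
  (∀ i j : Fin (ℓ+1), f i = f j →
    i = j ∨ (i = 0 ∧ j = Fin.last ℓ) ∨ (i = Fin.last ℓ ∧ j = 0))

/-- `N^σ(A, B)`: vertices of `B` reachable from some vertex of `A` by a `σ`-walk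
all of whose vertices other than the first lie in `B`. -/
def sigmaNbhd {n ℓ : ℕ} (D : Fin n → Fin n → Bool) (σ : Fin ℓ → Bool)
    (A B : Set (Fin n)) : Set (Fin n) :=
  {y | y ∈ B ∧ ∃ f : Fin (ℓ+1) → Fin n, IsSigmaWalk D σ f ∧ f 0 ∈ A ∧
    f (Fin.last ℓ) = y ∧ ∀ i : Fin (ℓ+1), i ≠ 0 → f i ∈ B}

/-!
Split `A` into two halves; the `σ^i`-neighbourhood of `A` is the union of those of the halves,
so one half `A'` still reaches `c = (log n)² / p` vertices of `Y`. Fix `⌈c⌉` of them together with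
a `σ^i`-walk to each. By expansion the out- (or in-) neighbourhood of these endpoints covers
`(1/2 + γ)|Y|` vertices of `Y`; every one of them that avoids the at most `(i+1)⌈c⌉ ≤ γ|Y|/6`
vertices of the fixed walks extends a walk by one step, giving at least `5(i+1)⌈c⌉ ≥ 2c` vertices
of the `σ^{i+1}`-neighbourhood of `A'`.
-/

section SigmaWalk

variable {n : ℕ} (D : Fin n → Fin n → Bool)

lemma sigmaNbhd_union {ℓ : ℕ} (σ : Fin ℓ → Bool) (A A' B : Set (Fin n)) :
    sigmaNbhd D σ (A ∪ A') B = sigmaNbhd D σ A B ∪ sigmaNbhd D σ A' B := by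
  ext y
  simp only [sigmaNbhd, Set.mem_union, Set.mem_ofPred_eq]
  grind

variable {D}

lemma IsSigmaWalk.injective_of_disjoint {k : ℕ} {σ : Fin k → Bool} {w : Fin (k+1) → Fin n}
    {A B : Set (Fin n)} (hw : IsSigmaWalk D σ w) (hAB : Disjoint A B) (hw0 : w 0 ∈ A)
    (hwB : ∀ j, j ≠ 0 → w j ∈ B) : Function.Injective w := by
  have hclosed : (0 : Fin (k+1)) ≠ Fin.last k → w 0 ≠ w (Fin.last k) := fun h0 heq =>
    hAB.ne_of_mem hw0 (hwB _ h0.symm) heq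
  intro a b hab
  rcases hw.2 a b hab with h | ⟨rfl, rfl⟩ | ⟨rfl, rfl⟩
  · exact h
  · by_contra h; exact hclosed h hab
  · by_contra h; exact hclosed (Ne.symm h) hab.symm

lemma IsSigmaWalk.snoc {k : ℕ} {σ : Fin (k+1) → Bool} {w : Fin (k+1) → Fin n} {y : Fin n}
    (hw : IsSigmaWalk D (Fin.init σ) w) (hinj : Function.Injective w) (hy : y ∉ Set.range w)
    (harc : if σ (Fin.last k) then D (w (Fin.last k)) y = true
      else D y (w (Fin.last k)) = true) :
    IsSigmaWalk D σ (Fin.snoc w y : Fin (k+2) → Fin n) := by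
  refine ⟨fun j => ?_, fun a b hab => Or.inl (Fin.snoc_injective_of_injective hinj hy hab)⟩
  induction j using Fin.lastCases with
  | last => simpa [Fin.succ_last] using harc
  | cast j =>
    rw [Fin.succ_castSucc, Fin.snoc_castSucc, Fin.snoc_castSucc]
    exact hw.1 j

lemma mem_sigmaNbhd_of_snoc {k : ℕ} {σ : Fin (k+1) → Bool} {A B : Set (Fin n)}
    (hAB : Disjoint A B) {w : Fin (k+1) → Fin n} (hw : IsSigmaWalk D (Fin.init σ) w)
    (hw0 : w 0 ∈ A) (hwB : ∀ j, j ≠ 0 → w j ∈ B) {y : Fin n} (hyB : y ∈ B)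
    (hy : y ∉ Set.range w)
    (harc : if σ (Fin.last k) then D (w (Fin.last k)) y = true
      else D y (w (Fin.last k)) = true) :
    y ∈ sigmaNbhd D σ A B := by
  refine ⟨hyB, _, hw.snoc (hw.injective_of_disjoint hAB hw0 hwB) hy harc, ?_, by simp, ?_⟩
  · rw [← Fin.castSucc_zero, Fin.snoc_castSucc]
    exact hw0
  · intro j hj
    induction j using Fin.lastCases with
    | last => simpa using hyB
    | cast j => simpa using hwB j (by rintro rfl; exact hj rfl)

end SigmaWalk

section Counting

variable {n : ℕ} {D : Fin n → Fin n → Bool}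

/-- An arc from the endpoint of a chosen `σ^k`-walk to a vertex of `Y` extends that walk unless
it lands on one of the at most `|S| (k+1)` vertices of the chosen walks. -/
lemma card_filter_le_ncard_sigmaNbhd_add {k : ℕ} {σ : Fin (k+1) → Bool} {A : Set (Fin n)}
    {Y S : Finset (Fin n)} (hAY : Disjoint A ↑Y) (hS : ↑S ⊆ sigmaNbhd D (Fin.init σ) A ↑Y) :
    (Y.filter fun y => ∃ x ∈ S,
        if σ (Fin.last k) then D x y = true else D y x = true).card ≤
      (sigmaNbhd D σ A ↑Y).ncard + S.card * (k+1) := by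
  choose! w hw using fun x (hx : x ∈ S) => (hS hx).2
  set B := S.biUnion fun x => Finset.univ.image (w x)
  have hB : B.card ≤ S.card * (k+1) := by
    calc B.card ≤ ∑ x ∈ S, (Finset.univ.image (w x)).card := Finset.card_biUnion_le
      _ ≤ ∑ _x ∈ S, (k+1) :=
          Finset.sum_le_sum fun x _ => Finset.card_image_le.trans (by simp)
      _ = S.card * (k+1) := by rw [Finset.sum_const, smul_eq_mul]
  have hsub : ↑(Y.filter fun y => ∃ x ∈ S,
      if σ (Fin.last k) then D x y = true else D y x = true) \ ↑B ⊆ sigmaNbhd D σ A ↑Y := by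
    rintro y ⟨hyF, hyB⟩
    obtain ⟨hyY, x, hxS, hxy⟩ := Finset.mem_filter.mp hyF
    obtain ⟨hwalk, hw0, hwx, hwY⟩ := hw x hxS
    refine mem_sigmaNbhd_of_snoc hAY hwalk hw0 hwY hyY ?_ (by rwa [hwx])
    rintro ⟨j, rfl⟩
    exact hyB (Finset.mem_biUnion.mpr ⟨x, hxS, Finset.mem_image_of_mem _ (Finset.mem_univ j)⟩)
  calc _ ≤ (_ \ B).card + B.card := Finset.card_le_card_sdiff_add_card
    _ ≤ (sigmaNbhd D σ A ↑Y).ncard + S.card * (k+1) := by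
      gcongr
      rw [← Set.ncard_coe_finset, Finset.coe_sdiff]
      exact Set.ncard_le_ncard hsub

lemma filter_exists_ite_arc_eq (D : Fin n → Fin n → Bool) (Y S : Finset (Fin n)) (b : Bool) :
    (Y.filter fun y => ∃ x ∈ S, if b then D x y = true else D y x = true) =
      if b then Y.filter fun y => ∃ x ∈ S, D x y = true
      else Y.filter fun y => ∃ x ∈ S, D y x = true := by
  cases b <;> rfl

lemma two_mul_le_ncard_sigmaNbhd {k : ℕ} {σ : Fin (k+1) → Bool} {A : Set (Fin n)}
    {Y : Finset (Fin n)} {γ c : ℝ} (hγ : 0 < γ) (hAY : Disjoint A ↑Y)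
    (hY : (6 * (k+1) / γ) * (⌈c⌉₊ : ℝ) ≤ Y.card)
    (hexp : ∀ S ⊆ Y, c ≤ (S.card : ℝ) →
      (1/2 + γ) * Y.card ≤ ((Y.filter fun y => ∃ x ∈ S, D x y = true).card : ℝ) ∧
      (1/2 + γ) * Y.card ≤ ((Y.filter fun y => ∃ x ∈ S, D y x = true).card : ℝ))
    (hN : c ≤ (sigmaNbhd D (Fin.init σ) A ↑Y).ncard) :
    2 * c ≤ (sigmaNbhd D σ A ↑Y).ncard := by
  have hNfin := Set.toFinite (sigmaNbhd D (Fin.init σ) A ↑Y)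
  obtain ⟨S, hS, hSm⟩ := Finset.exists_subset_card_eq (s := hNfin.toFinset) (n := ⌈c⌉₊)
    (by rw [← Set.ncard_eq_toFinset_card _ hNfin]; exact Nat.ceil_le.mpr hN)
  have hST : ↑S ⊆ sigmaNbhd D (Fin.init σ) A ↑Y := fun x hx => hNfin.mem_toFinset.mp (hS hx)
  have hSY : S ⊆ Y := fun x hx => Finset.mem_coe.mp (hST hx).1
  have hcS : c ≤ (S.card : ℝ) := hSm ▸ Nat.le_ceil c
  have hF : (1/2 + γ) * Y.card ≤
      ((Y.filter fun y => ∃ x ∈ S,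
        if σ (Fin.last k) then D x y = true else D y x = true).card : ℝ) := by
    rw [filter_exists_ite_arc_eq]
    cases σ (Fin.last k)
    exacts [(hexp S hSY hcS).2, (hexp S hSY hcS).1]
  have hcount : ((Y.filter fun y => ∃ x ∈ S,
        if σ (Fin.last k) then D x y = true else D y x = true).card : ℝ) ≤
      (sigmaNbhd D σ A ↑Y).ncard + ⌈c⌉₊ * (k+1) := by
    exact_mod_cast hSm ▸ card_filter_le_ncard_sigmaNbhd_add hAY hST
  have hYm : 6 * (k+1) * (⌈c⌉₊ : ℝ) ≤ γ * Y.card := by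
    rw [div_mul_eq_mul_div, div_le_iff₀ hγ] at hY
    linarith
  have hm : 0 ≤ (k : ℝ) * ⌈c⌉₊ := by positivity
  linarith [Nat.le_ceil c]

lemma exists_card_le_half_le_ncard_sigmaNbhd {ℓ : ℕ} (σ : Fin ℓ → Bool) (A : Finset (Fin n))
    (B : Set (Fin n)) {c : ℝ} (h : 2 * c ≤ (sigmaNbhd D σ ↑A B).ncard) :
    ∃ A' ⊆ A, A'.card ≤ (A.card + 1) / 2 ∧ c ≤ (sigmaNbhd D σ ↑A' B).ncard := by
  obtain ⟨A₁, hA₁, hA₁card⟩ := Finset.exists_subset_card_eq (Nat.div_le_self A.card 2)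
  have hA₂card : (A \ A₁).card = A.card - A.card / 2 := by
    rw [Finset.card_sdiff_of_subset hA₁, hA₁card]
  have hsplit : ((sigmaNbhd D σ ↑A B).ncard : ℝ) ≤
      (sigmaNbhd D σ ↑A₁ B).ncard + (sigmaNbhd D σ ↑(A \ A₁) B).ncard := by
    rw [← Finset.union_sdiff_of_subset hA₁, Finset.coe_union, sigmaNbhd_union,
      Finset.union_sdiff_of_subset hA₁]
    exact_mod_cast Set.ncard_union_le _ _
  by_cases h₁ : c ≤ (sigmaNbhd D σ ↑A₁ B).ncard
  · exact ⟨A₁, hA₁, by omega, h₁⟩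
  · exact ⟨A \ A₁, Finset.sdiff_subset, by omega, by linarith⟩

end Counting

theorem stmt_10_general (n : ℕ) (p γ : ℝ) (hγ0 : 0 < γ)
    (ℓ i : ℕ) (hi : i < ℓ) (σ : Fin ℓ → Bool)
    (D : Fin n → Fin n → Bool) (X Y A : Finset (Fin n))
    (hA : A ⊆ X) (hXY : Disjoint X Y)
    (hY : (6 * ℓ / γ) * (⌈(Real.log n) ^ 2 / p⌉₊ : ℝ) ≤ (Y.card : ℝ))
    (hexp : ∀ S ⊆ Y, (Real.log n) ^ 2 / p ≤ (S.card : ℝ) →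
      (1/2 + γ) * Y.card ≤ ((Y.filter fun y => ∃ x ∈ S, D x y = true).card : ℝ) ∧
      (1/2 + γ) * Y.card ≤ ((Y.filter fun y => ∃ x ∈ S, D y x = true).card : ℝ))
    (hAN : 2 * (Real.log n) ^ 2 / p ≤
      ((sigmaNbhd D (fun j : Fin i => σ (Fin.castLE hi.le j)) ↑A ↑Y).ncard : ℝ)) :
    ∃ A' ⊆ A, A'.card ≤ (A.card + 1) / 2 ∧
      2 * (Real.log n) ^ 2 / p ≤
        ((sigmaNbhd D (fun j : Fin (i+1) => σ (Fin.castLE hi j)) ↑A' ↑Y).ncard : ℝ) := by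
  rw [mul_div_assoc] at hAN ⊢
  obtain ⟨A', hA'A, hA'card, hA'N⟩ := exists_card_le_half_le_ncard_sigmaNbhd _ A _ hAN
  refine ⟨A', hA'A, hA'card, two_mul_le_ncard_sigmaNbhd hγ0 ?_ ?_ hexp hA'N⟩
  · exact Finset.disjoint_coe.mpr (hXY.mono_left (hA'A.trans hA))
  · refine le_trans ?_ hY
    have : (i : ℝ) + 1 ≤ ℓ := by exact_mod_cast hi
    gcongr

/-- Claim 4.3: if `A` has a large `σ^i`-neighbourhood in `Y`, then some half-size
subset `A' ⊆ A` has a large `σ^{i+1}`-neighbourhood in `Y`. -/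
theorem stmt_10 (n : ℕ) (p γ : ℝ) (hp : 0 < p) (hγ0 : 0 < γ) (hγ1 : γ < 1)
    (ℓ i : ℕ) (hi : i < ℓ) (σ : Fin ℓ → Bool)
    (D : Fin n → Fin n → Bool) (X Y A : Finset (Fin n))
    (hA : A ⊆ X) (hXY : Disjoint X Y)
    (hY : (6 * ℓ / γ) * (⌈(Real.log n) ^ 2 / p⌉₊ : ℝ) ≤ (Y.card : ℝ))
    (hexp : ∀ S ⊆ Y, (Real.log n) ^ 2 / p ≤ (S.card : ℝ) →
      (1/2 + γ) * Y.card ≤ ((Y.filter fun y => ∃ x ∈ S, D x y = true).card : ℝ) ∧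
      (1/2 + γ) * Y.card ≤ ((Y.filter fun y => ∃ x ∈ S, D y x = true).card : ℝ))
    (hAN : 2 * (Real.log n) ^ 2 / p ≤
      ((sigmaNbhd D (fun j : Fin i => σ (Fin.castLE hi.le j)) ↑A ↑Y).ncard : ℝ)) :
    ∃ A' ⊆ A, A'.card ≤ (A.card + 1) / 2 ∧
      2 * (Real.log n) ^ 2 / p ≤
        ((sigmaNbhd D (fun j : Fin (i+1) => σ (Fin.castLE hi j)) ↑A' ↑Y).ncard : ℝ) :=
  stmt_10_general n p γ hγ0 ℓ i hi σ D X Y A hA hXY hY hexp hAN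
end
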